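/- There exists a characteristic function of the dodecahedral right-angled Coxeter group W, i.e., a surjective group homomorphism λ : W → (ZMod 2)³ such that for each of the 20 triples of facets meeting at a vertex of the dodecahedron, the images of the corresponding three generators form a basis of (ZMod 2)³. -/

import Mathlib

/-- The 30 adjacency pairs among the 12 facets of the regular dodecahedron
(i.e., the edges of the icosahedron graph), under a fixed identification of
the facets with `Fin 12`: facet `0` is surrounded by facets `1,…,5` (in cyclic
order), facet `11` is surrounded by facets `6,…,10`, and the two pentagonal
"belts" are joined accordingly. -/
def dodecEdges : List (Fin 12 × Fin 12) :=
  [(0,1),(0,2),(0,3),(0,4),(0,5),(1,2),(2,3),(3,4),(4,5),(1,5),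
   (1,6),(1,10),(2,6),(2,7),(3,7),(3,8),(4,8),(4,9),(5,9),(5,10),
   (6,7),(7,8),(8,9),(9,10),(6,10),(6,11),(7,11),(8,11),(9,11),(10,11)]

/-- The facet adjacency relation of the regular dodecahedron. -/
def DodecAdj (i j : Fin 12) : Prop := (i, j) ∈ dodecEdges ∨ (j, i) ∈ dodecEdges

instance : DecidableRel DodecAdj := fun _ _ => inferInstanceAs (Decidable (_ ∨ _))

/-- The Coxeter matrix of the right-angled dodecahedral reflection group:
`1` on the diagonal, `2` for adjacent facets, and `∞` (encoded as `0`)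
for distinct non-adjacent facets. -/
def dodecCoxeterMatrix : CoxeterMatrix (Fin 12) where
  M := Matrix.of fun i j => if i = j then 1 else if DodecAdj i j then 2 else 0
  isSymm := by decide
  diagonal := by decide
  off_diagonal := by
    intro i j h
    simp only [Matrix.of_apply, if_neg h]
    split_ifs <;> decide

/-- The 20 triples of pairwise adjacent facets of the dodecahedron, one for each
vertex of the dodecahedron (these are exactly the triangles of the facet
adjacency graph). -/
def dodecVertexTriples : List (Fin 12 × Fin 12 × Fin 12) :=
  [(0,1,2),(0,1,5),(0,2,3),(0,3,4),(0,4,5),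
   (1,2,6),(1,5,10),(1,6,10),(2,3,7),(2,6,7),
   (3,4,8),(3,7,8),(4,5,9),(4,8,9),(5,9,10),
   (6,7,11),(6,10,11),(7,8,11),(8,9,11),(9,10,11)]

/-- A family of three vectors forms a basis of `(ZMod 2)³` iff it is linearly
independent and spans. -/
def IsBasisFam3 (v : Fin 3 → (Fin 3 → ZMod 2)) : Prop :=
  LinearIndependent (ZMod 2) v ∧ Submodule.span (ZMod 2) (Set.range v) = ⊤

/-- A characteristic function for the dodecahedral right-angled Coxeter group:
a surjective homomorphism to `(ZMod 2)³` (written multiplicatively) such that the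
images of the three simple reflections in the facets meeting at any vertex of the
dodecahedron form a basis of `(ZMod 2)³`. -/
def IsDodecCharacteristicFunction
    (l : dodecCoxeterMatrix.Group →* Multiplicative (Fin 3 → ZMod 2)) : Prop :=
  Function.Surjective l ∧
    ∀ t ∈ dodecVertexTriples,
      IsBasisFam3 ![Multiplicative.toAdd (l (dodecCoxeterMatrix.simple t.1)),
                    Multiplicative.toAdd (l (dodecCoxeterMatrix.simple t.2.1)),
                    Multiplicative.toAdd (l (dodecCoxeterMatrix.simple t.2.2))]

/-- A proper 4-coloring of the dodecahedron's facets by nonzero vectors of `(ZMod 2)³`. -/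
def dodecColor : Fin 12 → (Fin 3 → ZMod 2) :=
  ![![1,0,0], ![0,1,0], ![0,0,1], ![0,1,0], ![0,0,1], ![1,1,1],
    ![1,1,1], ![1,0,0], ![1,1,1], ![1,0,0], ![0,0,1], ![0,1,0]]

lemma isBasisFam3_of_det (v : Fin 3 → (Fin 3 → ZMod 2)) (h : (Matrix.of v).det ≠ 0) :
    IsBasisFam3 v := by
  have hu : IsUnit (Matrix.of v) := by
    rw [Matrix.isUnit_iff_isUnit_det, isUnit_iff_ne_zero]; exact h
  have hli : LinearIndependent (ZMod 2) v := Matrix.linearIndependent_rows_iff_isUnit.2 hu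
  exact ⟨hli, hli.span_eq_top_of_card_eq_finrank (by simp)⟩

lemma dodec_liftable :
    dodecCoxeterMatrix.IsLiftable (fun i => Multiplicative.ofAdd (dodecColor i)) := by
  unfold CoxeterMatrix.IsLiftable
  decide

/-- There exists a characteristic function of the dodecahedral right-angled
Coxeter group: a surjective homomorphism to `(ZMod 2)³` such that for each of the
20 triples of facets meeting at a vertex of the dodecahedron, the images of the
corresponding three generators form a basis of `(ZMod 2)³`. -/
theorem dodec_exists_characteristicFunction :
    ∃ l : dodecCoxeterMatrix.Group →* Multiplicative (Fin 3 → ZMod 2),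
      IsDodecCharacteristicFunction l := by
  refine ⟨dodecCoxeterMatrix.toCoxeterSystem.lift ⟨_, dodec_liftable⟩, ?_, ?_⟩
  · intro x
    have key : ∀ j : Fin 12,
        dodecCoxeterMatrix.toCoxeterSystem.lift ⟨_, dodec_liftable⟩
          (dodecCoxeterMatrix.simple j) = Multiplicative.ofAdd (dodecColor j) := fun j =>
      dodecCoxeterMatrix.toCoxeterSystem.lift_apply_simple dodec_liftable j
    have h2 : ∀ a : ZMod 2, a = 0 ∨ a = 1 := by decide
    have hx : x = Multiplicative.ofAdd
        ![Multiplicative.toAdd x 0, Multiplicative.toAdd x 1, Multiplicative.toAdd x 2] := by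
      apply Multiplicative.toAdd.injective
      funext j; fin_cases j <;> rfl
    rcases h2 (Multiplicative.toAdd x 0) with h0 | h0 <;>
      rcases h2 (Multiplicative.toAdd x 1) with h1 | h1 <;>
      rcases h2 (Multiplicative.toAdd x 2) with h2' | h2' <;>
      rw [hx, h0, h1, h2']
    · exact ⟨1, by rw [map_one]; decide⟩
    · exact ⟨dodecCoxeterMatrix.simple 2, by rw [key]; decide⟩
    · exact ⟨dodecCoxeterMatrix.simple 1, by rw [key]; decide⟩
    · exact ⟨dodecCoxeterMatrix.simple 1 * dodecCoxeterMatrix.simple 2,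
        by rw [map_mul, key, key]; decide⟩
    · exact ⟨dodecCoxeterMatrix.simple 0, by rw [key]; decide⟩
    · exact ⟨dodecCoxeterMatrix.simple 0 * dodecCoxeterMatrix.simple 2,
        by rw [map_mul, key, key]; decide⟩
    · exact ⟨dodecCoxeterMatrix.simple 0 * dodecCoxeterMatrix.simple 1,
        by rw [map_mul, key, key]; decide⟩
    · exact ⟨dodecCoxeterMatrix.simple 0 * dodecCoxeterMatrix.simple 1 *
        dodecCoxeterMatrix.simple 2, by rw [map_mul, map_mul, key, key, key]; decide⟩
  · intro t ht
    have key : ∀ j : Fin 12,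
        dodecCoxeterMatrix.toCoxeterSystem.lift ⟨_, dodec_liftable⟩
          (dodecCoxeterMatrix.simple j) = Multiplicative.ofAdd (dodecColor j) := fun j =>
      dodecCoxeterMatrix.toCoxeterSystem.lift_apply_simple dodec_liftable j
    fin_cases ht <;>
      simp only [key] <;>
      exact isBasisFam3_of_det _ (by decide)
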